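/- arXiv:1907.01999 — 3 statements merged into one kernel-verified Lean document; each statement's English description precedes it below -/
import Mathlib

section
/- A normal pseudofunctor between bicategories is a trivial fibration (i.e., surjective on objects and a surjective-on-objects equivalence on each hom-category) if and only if it is both a biequivalence and an equifibration. -/
/-!
A normal pseudofunctor between bicategories is a trivial fibration (surjective on objects
and a surjective-on-objects equivalence on each hom-category) if and only if it is both a
biequivalence and an equifibration.
-/

open CategoryTheory

universe w₁ w₂ v₁ v₂ u₁ u₂

namespace Stmt0

variable {B : Type u₁} [Bicategory.{w₁, v₁} B] {C : Type u₂} [Bicategory.{w₂, v₂} C]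

/-- A pseudofunctor is *normal* if it preserves identity 1-morphisms strictly, the
identity constraint being an identity 2-cell. -/
def IsNormal (F : Pseudofunctor B C) : Prop :=
  ∀ a : B, F.map (𝟙 a) = 𝟙 (F.obj a) ∧ HEq (F.mapId a).hom (𝟙 (F.map (𝟙 a)))

/-- A 1-morphism in a bicategory is an (internal) equivalence. -/
def IsEquivMor {a b : B} (f : a ⟶ b) : Prop :=
  ∃ g : b ⟶ a, Nonempty (𝟙 a ≅ f ≫ g) ∧ Nonempty (g ≫ f ≅ 𝟙 b)

/-- `F` is a biequivalence: biessentially surjective on objects, and an equivalence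
of categories on each hom-category. -/
def IsBiequivalence (F : Pseudofunctor B C) : Prop :=
  (∀ c : C, ∃ (a : B) (f : F.obj a ⟶ c), IsEquivMor f) ∧
  (∀ a b : B, (F.mapFunctor a b).IsEquivalence)

/-- A functor of (1-)categories is an isofibration: every isomorphism starting at an
object in the image lifts (strictly on the target object). -/
def IsIsofibration {D : Type*} {E : Type*} [Category D] [Category E] (G : D ⥤ E) : Prop :=
  ∀ (x : D) (y : E) (e : G.obj x ≅ y), ∃ (x' : D) (f : x ≅ x') (h : G.obj x' = y),
    G.map f.hom = e.hom ≫ eqToHom h.symm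

/-- `F` is an equifibration: equivalences lift strictly along `F`, and `F` is an
isofibration on each hom-category. -/
def IsEquifibration (F : Pseudofunctor B C) : Prop :=
  (∀ (a : B) (b : C) (g : F.obj a ⟶ b), IsEquivMor g →
    ∃ (a' : B) (f : a ⟶ a'), IsEquivMor f ∧ F.obj a' = b ∧ HEq (F.map f) g) ∧
  (∀ a b : B, IsIsofibration (F.mapFunctor a b))

/-- `F` is a trivial fibration: surjective on objects, and a surjective-on-objects
equivalence of categories on each hom-category. -/
def IsTrivialFibration (F : Pseudofunctor B C) : Prop :=
  (∀ b : C, ∃ a : B, F.obj a = b) ∧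
  (∀ a b : B, (F.mapFunctor a b).IsEquivalence ∧ Function.Surjective (F.mapFunctor a b).obj)

lemma id_isEquivMor (a : B) : IsEquivMor (𝟙 a) :=
  ⟨𝟙 a, ⟨(Bicategory.leftUnitor (𝟙 a)).symm⟩, ⟨Bicategory.leftUnitor (𝟙 a)⟩⟩

/-- A locally-an-equivalence normal pseudofunctor reflects equivalences. -/
lemma reflects_equiv (F : Pseudofunctor B C) (hF : IsNormal F)
    (hEq : ∀ a b : B, (F.mapFunctor a b).IsEquivalence)
    {a b : B} (f : a ⟶ b) (hf : IsEquivMor (F.map f)) : IsEquivMor f := by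
  obtain ⟨h, ⟨⟨i1⟩, ⟨i2⟩⟩⟩ := hf
  haveI := hEq b a
  haveI := hEq a a
  haveI := hEq b b
  let k : b ⟶ a := (F.mapFunctor b a).objPreimage h
  have η : F.map k ≅ h := (F.mapFunctor b a).objObjPreimageIso h
  -- iso F.map (f ≫ k) ≅ F.map (𝟙 a)
  have j1 : (F.mapFunctor a a).obj (f ≫ k) ≅ (F.mapFunctor a a).obj (𝟙 a) :=
    (F.mapComp f k) ≪≫ Bicategory.whiskerLeftIso (F.map f) η ≪≫ i1.symm ≪≫
      eqToIso (hF a).1.symm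
  have j2 : (F.mapFunctor b b).obj (k ≫ f) ≅ (F.mapFunctor b b).obj (𝟙 b) :=
    (F.mapComp k f) ≪≫ Bicategory.whiskerRightIso η (F.map f) ≪≫ i2 ≪≫
      eqToIso (hF b).1.symm
  exact ⟨k, ⟨((F.mapFunctor a a).preimageIso j1).symm⟩,
    ⟨(F.mapFunctor b b).preimageIso j2⟩⟩

/-- A normal pseudofunctor is a trivial fibration iff it is both a biequivalence and an
equifibration. -/
theorem trivialFibration_iff_biequivalence_and_equifibration
    (F : Pseudofunctor B C) (hF : IsNormal F) :
    IsTrivialFibration F ↔ IsBiequivalence F ∧ IsEquifibration F := by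
  constructor
  · rintro ⟨h1, h2⟩
    have heq : ∀ a b : B, (F.mapFunctor a b).IsEquivalence := fun a b => (h2 a b).1
    refine ⟨⟨fun c => ?_, heq⟩, ⟨fun a c g hg => ?_, fun a b => ?_⟩⟩
    · obtain ⟨a, ha⟩ := h1 c
      subst ha
      exact ⟨a, 𝟙 _, id_isEquivMor _⟩
    · obtain ⟨a', ha'⟩ := h1 c
      subst ha'
      obtain ⟨f, hf⟩ := (h2 a a').2 g
      refine ⟨a', f, ?_, rfl, heq_of_eq hf⟩
      exact reflects_equiv F hF heq f (by rw [show F.map f = g from hf]; exact hg)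
    · intro x y e
      haveI := (h2 a b).1
      obtain ⟨x', hx'⟩ := (h2 a b).2 y
      refine ⟨x', (F.mapFunctor a b).preimageIso (e ≪≫ eqToIso hx'.symm), hx', ?_⟩
      exact (F.mapFunctor a b).map_preimage _
  · rintro ⟨⟨h1, h2⟩, h3, h4⟩
    refine ⟨fun c => ?_, fun a b => ⟨h2 a b, fun g => ?_⟩⟩
    · obtain ⟨a, f, hf⟩ := h1 c
      obtain ⟨a', _, _, ha', _⟩ := h3 a c f hf
      exact ⟨a', ha'⟩
    · haveI := h2 a b
      obtain ⟨x, ⟨e⟩⟩ := Functor.EssSurj.mem_essImage (F := F.mapFunctor a b) g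
      obtain ⟨x', _, hx', _⟩ := h4 a b x g e
      exact ⟨x', hx'⟩

end Stmt0
end

section
/- Let F : A → B and G : B → C be functors between categories with A and B small and C locally small. If G is fully faithful and the composite G ∘ F is dense, then G is dense; moreover, the singular functor C(G,1) : C → [Bᵒᵖ, Set] is naturally isomorphic to the composite of the singular functor C(GF,1) : C → [Aᵒᵖ, Set] followed by right Kan extension along Fᵒᵖ. -/
/-!
If `G : B ⥤ C` is fully faithful and `G ∘ F` is dense, then `G` is dense; moreover the
singular functor of `G` is isomorphic to the singular functor of `G ∘ F` followed by
right Kan extension along `Fᵒᵖ`.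
-/

open CategoryTheory

universe v u

namespace Stmt2

/-- The singular (nerve) functor induced by `K : A ⥤ C`, sending `X : C` to the presheaf
`a ↦ C(K a, X)`. -/
def singular {A : Type v} [SmallCategory A] {C : Type u} [Category.{v} C] (K : A ⥤ C) :
    C ⥤ (Aᵒᵖ ⥤ Type v) :=
  yoneda ⋙ (Functor.whiskeringLeft Aᵒᵖ Cᵒᵖ (Type v)).obj K.op

/-- A functor is dense if its singular functor is fully faithful. -/
def IsDense {A : Type v} [SmallCategory A] {C : Type u} [Category.{v} C] (K : A ⥤ C) : Prop :=
  (singular K).Full ∧ (singular K).Faithful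

section Aux

variable {A B : Type v} [SmallCategory A] [SmallCategory B] {C : Type u} [Category.{v} C]
  (F : A ⥤ B) (G : B ⥤ C) [G.Full] [G.Faithful] [(singular (F ⋙ G)).Full]
  [(singular (F ⋙ G)).Faithful]

/-- Cancellation: morphisms out of `G b` agreeing after precomposition with every
`G g`, `g : F a ⟶ b`, are equal. -/
lemma cancel_aux {b : B} {X : C} (v w : G.obj b ⟶ X)
    (hvw : ∀ (a : A) (g : F.obj a ⟶ b), G.map g ≫ v = G.map g ≫ w) : v = w := by
  apply (singular (F ⋙ G)).map_injective
  apply NatTrans.ext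
  funext a; ext u
  obtain ⟨g, rfl⟩ := G.map_surjective (u : G.obj (F.obj a.unop) ⟶ G.obj b)
  exact hvw a.unop g

/-- Existence of a pointwise lift, characterized by its compatibilities. -/
lemma key_aux (X : C) (Q : Bᵒᵖ ⥤ Type v) (γ : F.op ⋙ Q ⟶ F.op ⋙ (singular G).obj X)
    (b : Bᵒᵖ) (q : Q.obj b) :
    ∃ f : G.obj b.unop ⟶ X, ∀ (a : A) (g : F.obj a ⟶ b.unop),
      G.map g ≫ f = γ.app (Opposite.op a) (Q.map g.op q) := by
  let δ : (singular (F ⋙ G)).obj (G.obj b.unop) ⟶ (singular (F ⋙ G)).obj X :=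
    { app := fun a => TypeCat.ofHom fun (u : G.obj (F.obj a.unop) ⟶ G.obj b.unop) =>
        γ.app a (Q.map (G.preimage u).op q)
      naturality := by
        intro a a' m
        ext (u : G.obj (F.obj a.unop) ⟶ G.obj b.unop)
        have hp : G.preimage (G.map (F.map m.unop) ≫ u) = F.map m.unop ≫ G.preimage u := by
          apply G.map_injective
          simp [Functor.map_preimage]
        have hγ := types_congr_hom (γ.naturality m) (Q.map (G.preimage u).op q)
        have e1 : Q.map (F.map m.unop ≫ G.preimage u).op q
            = Q.map (F.map m.unop).op (Q.map (G.preimage u).op q) := by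
          rw [op_comp, Functor.map_comp]; rfl
        dsimp [singular] at hγ ⊢
        rw [hp, e1]
        exact hγ }
  obtain ⟨f, hf⟩ := (singular (F ⋙ G)).map_surjective δ
  refine ⟨f, fun a g => ?_⟩
  have := types_congr_hom (congrArg (fun t => t.app (Opposite.op a)) hf)
    (G.map g : G.obj (F.obj a) ⟶ G.obj b.unop)
  dsimp [singular, δ] at this
  change G.map g ≫ f = γ.app (Opposite.op a) (Q.map (G.preimage (G.map g)).op q) at this
  rw [G.preimage_map] at this
  exact this

end Aux

theorem dense_of_comp_dense_of_fullyFaithful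
    {A B : Type v} [SmallCategory A] [SmallCategory B] {C : Type u} [Category.{v} C]
    (F : A ⥤ B) (G : B ⥤ C) (hGfull : G.Full) (hGfaithful : G.Faithful)
    [∀ H : Aᵒᵖ ⥤ Type v, F.op.HasRightKanExtension H]
    (h : IsDense (F ⋙ G)) :
    IsDense G ∧ Nonempty (singular G ≅ singular (F ⋙ G) ⋙ F.op.ran) := by
  haveI := hGfull; haveI := hGfaithful
  obtain ⟨hfull, hfaith⟩ := h
  haveI := hfull; haveI := hfaith
  -- Faithfulness of `singular G`
  have faithG : (singular G).Faithful := by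
    constructor
    intro X Y v w hvw
    apply (singular (F ⋙ G)).map_injective
    apply NatTrans.ext
    funext a; ext u
    exact types_congr_hom (congrArg (fun t => t.app (Opposite.op (F.obj a.unop))) hvw) u
  -- Fullness of `singular G`
  have fullG : (singular G).Full := by
    constructor
    intro X Y α
    let β : (singular (F ⋙ G)).obj X ⟶ (singular (F ⋙ G)).obj Y :=
      { app := fun a => α.app (Opposite.op (F.obj a.unop))
        naturality := fun a a' m => α.naturality ((F.map m.unop).op) }
    obtain ⟨f, hf⟩ := (singular (F ⋙ G)).map_surjective β
    refine ⟨f, ?_⟩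
    apply NatTrans.ext
    funext b; ext (u : G.obj b.unop ⟶ X)
    show u ≫ f = α.app b u
    refine cancel_aux F G (u ≫ f) (α.app b u) fun a g => ?_
    have h1 := types_congr_hom (α.naturality (g.op : b ⟶ Opposite.op (F.obj a))) u
    have h2 := types_congr_hom (congrArg (fun t => t.app (Opposite.op a)) hf)
      (G.map g ≫ u : G.obj (F.obj a) ⟶ X)
    dsimp [singular, β] at h1 h2 ⊢
    change α.app (Opposite.op (F.obj a)) (G.map g ≫ u) = G.map g ≫ α.app b u at h1
    change (G.map g ≫ u) ≫ f = α.app (Opposite.op (F.obj a)) (G.map g ≫ u) at h2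
    rw [← Category.assoc, h2, h1]
    rfl
  -- the right Kan extension property
  have rke : ∀ X : C, ((singular G).obj X).IsRightKanExtension
      (𝟙 (F.op ⋙ (singular G).obj X)) := by
    intro X
    constructor
    refine ⟨Limits.IsTerminal.ofUniqueHom (fun ext => ?_) (fun ext m => ?_)⟩
    · -- the lift
      refine CostructuredArrow.homMk
        { app := fun b => TypeCat.ofHom fun q => (key_aux F G X ext.left ext.hom b q).choose
          naturality := ?_ } ?_
      · intro b b' m
        ext q
        refine cancel_aux F G _ _ fun a g => ?_
        have hs := (key_aux F G X ext.left ext.hom b' (ext.left.map m q)).choose_spec a g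
        have hs' := (key_aux F G X ext.left ext.hom b q).choose_spec a (g ≫ m.unop)
        have e1 : ext.left.map (m ≫ g.op) q = ext.left.map g.op (ext.left.map m q) := by
          rw [Functor.map_comp]; rfl
        dsimp [singular] at hs hs' ⊢
        change G.map (g ≫ m.unop) ≫ (key_aux F G X ext.left ext.hom b q).choose
          = ext.hom.app (Opposite.op a) (ext.left.map (m ≫ g.op) q) at hs'
        change G.map g ≫ (key_aux F G X ext.left ext.hom b' (ext.left.map m q)).choose
          = G.map g ≫ (G.map m.unop ≫ (key_aux F G X ext.left ext.hom b q).choose)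
        rw [hs, ← Category.assoc, ← G.map_comp, hs', e1]
        rfl
      · apply NatTrans.ext
        funext a; ext q
        have hs := (key_aux F G X ext.left ext.hom (Opposite.op (F.obj a.unop)) q).choose_spec
          a.unop (𝟙 (F.obj a.unop))
        simp only [op_id, CategoryTheory.Functor.map_id, Category.id_comp] at hs
        exact hs
    · -- uniqueness
      apply CostructuredArrow.hom_ext
      apply NatTrans.ext
      funext b; ext q
      refine cancel_aux F G _ _ fun a g => ?_
      have hnat := types_congr_hom (m.left.naturality (g.op : b ⟶ Opposite.op (F.obj a))) q
      have hw := types_congr_hom (congrArg (fun t => t.app (Opposite.op a)) m.w)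
        (ext.left.map g.op q)
      have hs := (key_aux F G X ext.left ext.hom b q).choose_spec a g
      dsimp [singular] at hnat hw hs ⊢
      change m.left.app (Opposite.op (F.obj a)) (ext.left.map g.op q) = G.map g ≫ m.left.app b q at hnat
      change m.left.app (Opposite.op (F.obj a)) (ext.left.map g.op q)
        = ext.hom.app (Opposite.op a) (ext.left.map g.op q) at hw
      change G.map g ≫ m.left.app b q = G.map g ≫ (key_aux F G X ext.left ext.hom b q).choose
      rw [← hnat, hw, hs]
      rfl
  haveI : ∀ X : C, IsIso ((F.op.ranAdjunction (Type v)).unit.app ((singular G).obj X)) := by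
    intro X
    rw [Functor.isIso_ranAdjunction_unit_app_iff]
    exact rke X
  let η : singular G ⟶ singular (F ⋙ G) ⋙ F.op.ran :=
    { app := fun X => by
        have := (F.op.ranAdjunction (Type v)).unit.app ((singular G).obj X)
        exact this
      naturality := fun X Y f =>
        (F.op.ranAdjunction (Type v)).unit.naturality ((singular G).map f) }
  haveI : IsIso η := @NatIso.isIso_of_isIso_app _ _ _ _ _ _ η fun X => by exact this X
  exact ⟨⟨fullG, faithG⟩, ⟨asIso η⟩⟩

end Stmt2
end

section
/- For any bicategory B, normal pseudofunctors from the free-living isomorphism 𝕀 (the contractible groupoid with two objects, regarded as a locally discrete bicategory) to B are in natural bijection with adjoint equivalences in B. -/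
/-!
For any bicategory `B`, normal pseudofunctors from the free-living isomorphism `𝕀` (the
contractible groupoid with two objects, regarded as a locally discrete bicategory) to
`B` are in natural bijection with adjoint equivalences in `B`.
-/

open CategoryTheory
open scoped CategoryTheory.Bicategory

namespace Stmt9

/-- The two objects of the free-living isomorphism `𝕀`. -/
inductive IObj : Type
  | zero | one

/-- The contractible groupoid with two objects: there is exactly one morphism between
any two objects. -/
instance : Category IObj where
  Hom _ _ := PUnit
  id _ := PUnit.unit
  comp _ _ := PUnit.unit
  id_comp _ := rfl
  comp_id _ := rfl
  assoc _ _ _ := rfl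

/-- The free-living isomorphism `𝕀`, viewed as a locally discrete bicategory. -/
abbrev IBicat := LocallyDiscrete IObj

universe w v u

variable {B : Type u} [Bicategory.{w, v} B]

/-- A pseudofunctor is *normal* if it preserves identity 1-morphisms strictly, the
identity constraint being an identity 2-cell. -/
def IsNormal (F : Pseudofunctor IBicat B) : Prop :=
  ∀ a : IBicat, F.map (𝟙 a) = 𝟙 (F.obj a) ∧ HEq (F.mapId a).hom (𝟙 (F.map (𝟙 a)))

/-- An adjoint equivalence in a bicategory `B`: an adjunction whose unit and counit are
invertible 2-cells. -/
structure AdjointEquivalence (a b : B) where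
  f : a ⟶ b
  g : b ⟶ a
  adj : Bicategory.Adjunction f g
  unit_isIso : IsIso adj.unit
  counit_isIso : IsIso adj.counit

/-- The generating morphisms `0 ⟶ 1` and `1 ⟶ 0` of `𝕀`. -/
def gen01 : (⟨IObj.zero⟩ : IBicat) ⟶ ⟨IObj.one⟩ := ⟨PUnit.unit⟩
def gen10 : (⟨IObj.one⟩ : IBicat) ⟶ ⟨IObj.zero⟩ := ⟨PUnit.unit⟩

instance {x y : IBicat} : Subsingleton (x ⟶ y) :=
  ⟨fun m m' => by obtain ⟨m⟩ := m; obtain ⟨m'⟩ := m'; rfl⟩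

lemma hom_eq {x y : IBicat} (m m' : x ⟶ y) : m = m' := Subsingleton.elim m m'

-- eqToHom with defeq endpoints reduces
example (F : Pseudofunctor IBicat B) (q : F.map (gen01 ≫ 𝟙 _) = F.map gen01) :
    eqToHom q = 𝟙 (F.map gen01) := rfl

lemma map₂_any (F : Pseudofunctor IBicat B) {x y : IBicat} {m m' : x ⟶ y} (η : m ⟶ m') :
    F.map₂ η = eqToHom (F.congr_map (hom_eq m m')) := by
  rw [Subsingleton.elim η (eqToHom (hom_eq m m'))]
  exact F.toPrelaxFunctor.map₂_eqToHom _ _ _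

lemma hom_eq_eqToHom {a b : B} {p q : a ⟶ b} (h : p = q) {η : p ⟶ q} (hη : HEq η (𝟙 p)) :
    η = eqToHom h := by
  subst h; rw [eqToHom_refl]; exact eq_of_heq hη

lemma mapId_hom {F : Pseudofunctor IBicat B} (hF : IsNormal F) (x : IBicat) :
    (F.mapId x).hom = eqToHom (hF x).1 :=
  hom_eq_eqToHom (hF x).1 (hF x).2

lemma mapId_eq {F : Pseudofunctor IBicat B} (hF : IsNormal F) (x : IBicat) :
    F.mapId x = eqToIso (hF x).1 :=
  Iso.ext (mapId_hom hF x)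


@[simp] lemma wl_eqToHom {a b c : B} (f : a ⟶ b) {g h : b ⟶ c} (e : g = h) :
    f ◁ eqToHom e = eqToHom (by rw [e]) := by subst e; simp

@[simp] lemma wr_eqToHom {a b c : B} {f g : a ⟶ b} (e : f = g) (h : b ⟶ c) :
    eqToHom e ▷ h = eqToHom (by rw [e]) := by subst e; simp

section Extract

open Bicategory

variable {F : Pseudofunctor IBicat B} (hF : IsNormal F)

lemma mapComp_id_right {x y : IBicat} (m : x ⟶ y) :
    (F.mapComp m (𝟙 y)).hom = (ρ_ (F.map m)).inv ≫ F.map m ◁ eqToHom (hF y).1.symm := by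
  have h := F.map₂_right_unitor m
  rw [Subsingleton.elim (ρ_ m).hom (eqToHom (hom_eq _ _)), PrelaxFunctor.map₂_eqToHom,
    mapId_hom hF] at h
  calc (F.mapComp m (𝟙 y)).hom
      = ((F.mapComp m (𝟙 y)).hom ≫ F.map m ◁ eqToHom (hF y).1 ≫ (ρ_ (F.map m)).hom) ≫
          (ρ_ (F.map m)).inv ≫ F.map m ◁ eqToHom (hF y).1.symm := by
        simp [eqToHom_trans]
    _ = eqToHom (F.congr_map (hom_eq _ _)) ≫
          (ρ_ (F.map m)).inv ≫ F.map m ◁ eqToHom (hF y).1.symm :=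
        congrArg (fun t => t ≫ (ρ_ (F.map m)).inv ≫ F.map m ◁ eqToHom (hF y).1.symm) h.symm
    _ = _ := Category.id_comp _

lemma mapComp_id_left {x y : IBicat} (m : x ⟶ y) :
    (F.mapComp (𝟙 x) m).hom = (λ_ (F.map m)).inv ≫ eqToHom (hF x).1.symm ▷ F.map m := by
  have h := F.map₂_left_unitor m
  rw [Subsingleton.elim (λ_ m).hom (eqToHom (hom_eq _ _)), PrelaxFunctor.map₂_eqToHom,
    mapId_hom hF] at h
  calc (F.mapComp (𝟙 x) m).hom
      = ((F.mapComp (𝟙 x) m).hom ≫ eqToHom (hF x).1 ▷ F.map m ≫ (λ_ (F.map m)).hom) ≫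
          (λ_ (F.map m)).inv ≫ eqToHom (hF x).1.symm ▷ F.map m := by
        simp [eqToHom_trans]
    _ = eqToHom (F.congr_map (hom_eq _ _)) ≫
          (λ_ (F.map m)).inv ≫ eqToHom (hF x).1.symm ▷ F.map m :=
        congrArg (fun t => t ≫ (λ_ (F.map m)).inv ≫ eqToHom (hF x).1.symm ▷ F.map m) h.symm
    _ = _ := Category.id_comp _

end Extract

section Extract2
open Bicategory
variable {F : Pseudofunctor IBicat B} (hF : IsNormal F)

/-- The unit extracted from a normal pseudofunctor. -/
def exUnit : 𝟙 (F.obj ⟨IObj.zero⟩) ⟶ F.map gen01 ≫ F.map gen10 :=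
  eqToHom (hF ⟨IObj.zero⟩).1.symm ≫ (F.mapComp gen01 gen10).hom

/-- The counit extracted from a normal pseudofunctor. -/
def exCounit : F.map gen10 ≫ F.map gen01 ⟶ 𝟙 (F.obj ⟨IObj.one⟩) :=
  (F.mapComp gen10 gen01).inv ≫ eqToHom (hF ⟨IObj.one⟩).1

lemma lz_unfold {a b : B} {f : a ⟶ b} {g : b ⟶ a} (η : 𝟙 a ⟶ f ≫ g) (θ : g ≫ f ⟶ 𝟙 b) :
    leftZigzag η θ = η ▷ f ≫ (α_ f g f).hom ≫ f ◁ θ := by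
  dsimp only [leftZigzag]
  bicategory

lemma ex_left_triangle :
    leftZigzag (exUnit hF) (exCounit hF) = (λ_ (F.map gen01)).hom ≫ (ρ_ (F.map gen01)).inv := by
  have hD : (F.mapComp gen01 (gen10 ≫ gen01)).hom
      = (ρ_ (F.map gen01)).inv ≫ F.map gen01 ◁ eqToHom (hF ⟨IObj.one⟩).1.symm :=
    mapComp_id_right hF gen01
  have hA : (F.mapComp (gen01 ≫ gen10) gen01).hom
      = (λ_ (F.map gen01)).inv ≫ eqToHom (hF ⟨IObj.zero⟩).1.symm ▷ F.map gen01 :=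
    mapComp_id_left hF gen01
  have hD' : (F.mapComp gen01 (gen10 ≫ gen01)).inv
      = F.map gen01 ◁ eqToHom (hF ⟨IObj.one⟩).1 ≫ (ρ_ (F.map gen01)).hom := by
    rw [← cancel_epi (F.mapComp gen01 (gen10 ≫ gen01)).hom, Iso.hom_inv_id, hD]
    simp [eqToHom_trans]
  have h := F.map₂_associator gen01 gen10 gen01
  rw [Subsingleton.elim (α_ gen01 gen10 gen01).hom (eqToHom (hom_eq _ _)),
    PrelaxFunctor.map₂_eqToHom, hA, hD'] at h
  rw [lz_unfold]
  dsimp only [exUnit, exCounit]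
  rw [comp_whiskerRight, Bicategory.whiskerLeft_comp]
  rw [← cancel_epi ((λ_ (F.map gen01)).inv), ← cancel_mono ((ρ_ (F.map gen01)).hom)]
  simp only [Category.assoc, Iso.inv_hom_id_assoc, Iso.inv_hom_id, Category.comp_id,
    Iso.hom_inv_id, Category.id_comp]
  simp only [Category.assoc] at h
  rw [← h]
  rfl


instance : IsIso (exUnit hF) := by dsimp only [exUnit]; infer_instance
instance : IsIso (exCounit hF) := by dsimp only [exCounit]; infer_instance

/-- The adjunction extracted from a normal pseudofunctor. -/
def exAdj : Bicategory.Adjunction (F.map gen01) (F.map gen10) where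
  unit := exUnit hF
  counit := exCounit hF
  left_triangle := ex_left_triangle hF
  right_triangle := by
    have := Bicategory.right_triangle_of_left_triangle (asIso (exUnit hF)) (asIso (exCounit hF))
    simp only [asIso_hom] at this
    exact this (ex_left_triangle hF)

/-- Extraction of an adjoint equivalence from a normal pseudofunctor. -/
def extract (F : Pseudofunctor IBicat B) (hF : IsNormal F) : Σ (a b : B), AdjointEquivalence a b :=
  ⟨F.obj ⟨IObj.zero⟩, F.obj ⟨IObj.one⟩,
    { f := F.map gen01
      g := F.map gen10
      adj := exAdj hF
      unit_isIso := by dsimp only [exAdj]; infer_instance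
      counit_isIso := by dsimp only [exAdj]; infer_instance }⟩

end Extract2

section Build
open Bicategory

lemma rz_unfold {a b : B} {f : a ⟶ b} {g : b ⟶ a} (η : 𝟙 a ⟶ f ≫ g) (θ : g ≫ f ⟶ 𝟙 b) :
    rightZigzag η θ = g ◁ η ≫ (α_ g f g).inv ≫ θ ▷ g := by
  dsimp only [rightZigzag]
  bicategory

variable {a b : B} (E : AdjointEquivalence a b)

instance : IsIso E.adj.unit := E.unit_isIso
instance : IsIso E.adj.counit := E.counit_isIso

/-- Object part of the pseudofunctor built from an adjoint equivalence. -/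
def bObj : IBicat → B
  | ⟨IObj.zero⟩ => a
  | ⟨IObj.one⟩ => b

/-- 1-morphism part. -/
def bMap : ∀ x y : IBicat, bObj (a := a) (b := b) x ⟶ bObj (a := a) (b := b) y :=
  fun x y =>
    match x, y with
    | ⟨IObj.zero⟩, ⟨IObj.zero⟩ => 𝟙 a
    | ⟨IObj.zero⟩, ⟨IObj.one⟩ => E.f
    | ⟨IObj.one⟩, ⟨IObj.zero⟩ => E.g
    | ⟨IObj.one⟩, ⟨IObj.one⟩ => 𝟙 b

/-- Identity constraints. -/
def bMapId : ∀ x : IBicat, bMap (a := a) (b := b) E x x ≅ 𝟙 (bObj (a := a) (b := b) x)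
  | ⟨IObj.zero⟩ => Iso.refl (𝟙 a)
  | ⟨IObj.one⟩ => Iso.refl (𝟙 b)

/-- Composition constraints. -/
noncomputable def bMapComp : ∀ x y z : IBicat,
    bMap (a := a) (b := b) E x z ≅ bMap E x y ≫ bMap E y z :=
  fun x y z =>
    match x, y, z with
    | ⟨IObj.zero⟩, ⟨IObj.zero⟩, ⟨IObj.zero⟩ => (λ_ (𝟙 a)).symm
    | ⟨IObj.zero⟩, ⟨IObj.zero⟩, ⟨IObj.one⟩ => (λ_ E.f).symm
    | ⟨IObj.zero⟩, ⟨IObj.one⟩, ⟨IObj.zero⟩ => (asIso E.adj.unit : 𝟙 a ≅ E.f ≫ E.g)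
    | ⟨IObj.zero⟩, ⟨IObj.one⟩, ⟨IObj.one⟩ => (ρ_ E.f).symm
    | ⟨IObj.one⟩, ⟨IObj.zero⟩, ⟨IObj.zero⟩ => (ρ_ E.g).symm
    | ⟨IObj.one⟩, ⟨IObj.zero⟩, ⟨IObj.one⟩ => (asIso E.adj.counit).symm
    | ⟨IObj.one⟩, ⟨IObj.one⟩, ⟨IObj.zero⟩ => (λ_ E.g).symm
    | ⟨IObj.one⟩, ⟨IObj.one⟩, ⟨IObj.one⟩ => (λ_ (𝟙 b)).symm

lemma b_left_tri :
    E.adj.unit ▷ E.f ≫ (α_ E.f E.g E.f).hom ≫ E.f ◁ E.adj.counit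
      = (λ_ E.f).hom ≫ (ρ_ E.f).inv := by
  rw [← lz_unfold]; exact E.adj.left_triangle

lemma b_right_tri :
    E.g ◁ E.adj.unit ≫ (α_ E.g E.f E.g).inv ≫ E.adj.counit ▷ E.g
      = (ρ_ E.g).hom ≫ (λ_ E.g).inv := by
  rw [← rz_unfold]; exact E.adj.right_triangle

lemma b_right_tri_inv :
    inv E.adj.counit ▷ E.g ≫ (α_ E.g E.f E.g).hom ≫ E.g ◁ inv E.adj.unit
      = (λ_ E.g).hom ≫ (ρ_ E.g).inv := by
  have h : (whiskerLeftIso E.g (asIso E.adj.unit) ≪≫ (α_ E.g E.f E.g).symm ≪≫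
      whiskerRightIso (asIso E.adj.counit) E.g).inv = ((ρ_ E.g) ≪≫ (λ_ E.g).symm).inv := by
    congr 1
    apply Iso.ext
    simpa using b_right_tri E
  simpa using h

lemma b_left_tri_inv :
    E.f ◁ inv E.adj.counit ≫ (α_ E.f E.g E.f).inv ≫ inv E.adj.unit ▷ E.f
      = (ρ_ E.f).hom ≫ (λ_ E.f).inv := by
  have h : (whiskerRightIso (asIso E.adj.unit) E.f ≪≫ (α_ E.f E.g E.f) ≪≫
      whiskerLeftIso E.f (asIso E.adj.counit)).inv = ((λ_ E.f) ≪≫ (ρ_ E.f).symm).inv := by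
    congr 1
    apply Iso.ext
    simpa using b_left_tri E
  simpa using h

attribute [reducible] bObj

/-- The normal pseudofunctor built from an adjoint equivalence. -/
noncomputable def build : Pseudofunctor IBicat B where
  obj := bObj (a := a) (b := b)
  map := fun {x y} _ => bMap E x y
  map₂ := fun _ => 𝟙 _
  map₂_id := fun _ => rfl
  map₂_comp := fun _ _ => (Category.id_comp _).symm
  mapId := fun x => bMapId E x
  mapComp := fun {x y z} _ _ => bMapComp E x y z
  map₂_whisker_left := by
    intro x y z f g h η
    simp
  map₂_whisker_right := by
    intro x y z f g η h
    simp
  map₂_associator := by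
    rintro ⟨x⟩ ⟨y⟩ ⟨z⟩ ⟨w⟩ f g h
    cases x <;> cases y <;> cases z <;> cases w <;>
      dsimp [bObj, bMap, bMapComp] <;>
      simp [reassoc_of% (b_left_tri E), reassoc_of% (b_right_tri E), b_left_tri, b_right_tri,
        b_right_tri_inv, reassoc_of% (b_right_tri_inv E), b_left_tri_inv,
        reassoc_of% (b_left_tri_inv E)]
  map₂_left_unitor := by
    rintro ⟨x⟩ ⟨y⟩ f
    cases x <;> cases y <;> dsimp [bObj, bMap, bMapComp, bMapId] <;>
      simp [Bicategory.unitors_equal]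
  map₂_right_unitor := by
    rintro ⟨x⟩ ⟨y⟩ f
    cases x <;> cases y <;> dsimp [bObj, bMap, bMapComp, bMapId] <;>
      simp [Bicategory.unitors_equal]

lemma build_isNormal : IsNormal (build E) := by
  rintro ⟨x⟩
  cases x <;> exact ⟨rfl, HEq.rfl⟩

end Build

section Ext

lemma iso_heq {c d : B} {p₁ q₁ p₂ q₂ : c ⟶ d} (hp : p₁ = p₂) (hq : q₁ = q₂)
    {i₁ : p₁ ≅ q₁} {i₂ : p₂ ≅ q₂} (h : i₁.hom = eqToHom hp ≫ i₂.hom ≫ eqToHom hq.symm) :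
    HEq i₁ i₂ := by
  subst hp; subst hq
  simp only [eqToHom_refl, Category.comp_id, Category.id_comp] at h
  exact heq_of_eq (Iso.ext h)

theorem pf_ext {F G : Pseudofunctor IBicat B}
    (hobj : ∀ x : IBicat, F.obj x = G.obj x)
    (hmap : ∀ {x y : IBicat} (m : x ⟶ y), HEq (F.map m) (G.map m))
    (hmapId : ∀ x : IBicat, HEq (F.mapId x) (G.mapId x))
    (hmapComp : ∀ {x y z : IBicat} (m : x ⟶ y) (m' : y ⟶ z),
      HEq (F.mapComp m m') (G.mapComp m m')) :
    F = G := by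
  obtain ⟨⟨⟨⟨Fobj, Fmap⟩, Fmap₂⟩, Fpid, Fpcomp⟩, FmapId, FmapComp, _, _, _, _, _⟩ := F
  obtain ⟨⟨⟨⟨Gobj, Gmap⟩, Gmap₂⟩, Gpid, Gpcomp⟩, GmapId, GmapComp, _, _, _, _, _⟩ := G
  obtain rfl : Fobj = Gobj := funext hobj
  obtain rfl : @Fmap = @Gmap := by
    funext x y m
    exact eq_of_heq (hmap m)
  obtain rfl : @Fmap₂ = @Gmap₂ := by
    funext x y m m' η
    obtain rfl : m = m' := hom_eq m m'
    rw [Subsingleton.elim η (𝟙 m)]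
    exact (Fpid m).trans (Gpid m).symm
  obtain rfl : FmapId = GmapId := by
    funext x
    exact eq_of_heq (hmapId x)
  obtain rfl : @FmapComp = @GmapComp := by
    funext x y z m m'
    exact eq_of_heq (hmapComp m m')
  rfl

end Ext

section Final
open Bicategory

lemma adj_ext {a b : B} {f : a ⟶ b} {g : b ⟶ a} {A A' : Bicategory.Adjunction f g}
    (h1 : A.unit = A'.unit) (h2 : A.counit = A'.counit) : A = A' := by
  cases A; cases A'
  cases h1; cases h2
  rfl

lemma adjeq_ext {a b : B} {X Y : AdjointEquivalence a b} (hf : X.f = Y.f) (hg : X.g = Y.g)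
    (h : HEq X.adj Y.adj) : X = Y := by
  cases X; cases Y
  dsimp at hf hg h
  subst hf; subst hg
  cases h
  rfl

universe t

lemma exUnit_build {a b : B} (E : AdjointEquivalence a b) :
    exUnit.{w, v, u, t} (build_isNormal E) = E.adj.unit := Category.id_comp _

lemma exCounit_build {a b : B} (E : AdjointEquivalence a b) :
    exCounit.{w, v, u, t} (build_isNormal E) = E.adj.counit := Category.comp_id _

lemma exAdj_build {a b : B} (E : AdjointEquivalence a b) :
    exAdj.{w, v, u, t} (build_isNormal E) = E.adj := adj_ext (exUnit_build.{w, v, u, t} E) (exCounit_build.{w, v, u, t} E)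

lemma right_inv_aux {a b : B} (E : AdjointEquivalence a b) :
    extract.{w, v, u, t} (build E) (build_isNormal E) = ⟨a, b, E⟩ :=
  congrArg (fun t => (⟨a, b, t⟩ : Σ (a b : B), AdjointEquivalence a b))
    (adjeq_ext rfl rfl (heq_of_eq (exAdj_build.{w, v, u, t} E)))

end Final

section LeftInv
open Bicategory

lemma lunit_inv_conj {c d : B} {X Y : c ⟶ d} (q : X = Y) :
    (λ_ X).inv = eqToHom q ≫ (λ_ Y).inv ≫ eqToHom (by rw [q]) := by
  subst q; simp

lemma runit_inv_conj {c d : B} {X Y : c ⟶ d} (q : X = Y) :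
    (ρ_ X).inv = eqToHom q ≫ (ρ_ Y).inv ≫ eqToHom (by rw [q]) := by
  subst q; simp

lemma left_inv_aux {F : Pseudofunctor IBicat B} (hF : IsNormal F) :
    build (extract F hF).2.2 = F := by
  apply pf_ext
  · rintro ⟨x⟩; cases x <;> rfl
  · rintro ⟨x⟩ ⟨y⟩ m
    cases x <;> cases y
    · obtain rfl : m = 𝟙 (⟨IObj.zero⟩ : IBicat) := hom_eq _ _
      exact heq_of_eq (hF ⟨IObj.zero⟩).1.symm
    · obtain rfl : m = gen01 := hom_eq _ _
      exact HEq.rfl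
    · obtain rfl : m = gen10 := hom_eq _ _
      exact HEq.rfl
    · obtain rfl : m = 𝟙 (⟨IObj.one⟩ : IBicat) := hom_eq _ _
      exact heq_of_eq (hF ⟨IObj.one⟩).1.symm
  · rintro ⟨x⟩
    cases x
    · refine (iso_heq (hF ⟨IObj.zero⟩).1
        (rfl : 𝟙 (F.obj ⟨IObj.zero⟩) = 𝟙 (F.obj ⟨IObj.zero⟩)) ?_).symm
      dsimp only [build, bMapId, extract]
      simp [mapId_hom hF]
    · refine (iso_heq (hF ⟨IObj.one⟩).1
        (rfl : 𝟙 (F.obj ⟨IObj.one⟩) = 𝟙 (F.obj ⟨IObj.one⟩)) ?_).symm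
      dsimp only [build, bMapId, extract]
      simp [mapId_hom hF]
  · rintro ⟨x⟩ ⟨y⟩ ⟨z⟩ m m'
    cases x <;> cases y <;> cases z
    -- 000
    · obtain rfl : m = 𝟙 (⟨IObj.zero⟩ : IBicat) := hom_eq _ _
      obtain rfl : m' = 𝟙 (⟨IObj.zero⟩ : IBicat) := hom_eq _ _
      refine (iso_heq (hF ⟨IObj.zero⟩).1
        (by rw [(hF ⟨IObj.zero⟩).1] :
          F.map (𝟙 (⟨IObj.zero⟩ : IBicat)) ≫ F.map (𝟙 (⟨IObj.zero⟩ : IBicat))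
            = 𝟙 (F.obj ⟨IObj.zero⟩) ≫ 𝟙 (F.obj ⟨IObj.zero⟩)) ?_).symm
      rw [mapComp_id_left hF, lunit_inv_conj (hF ⟨IObj.zero⟩).1]
      dsimp only [build, bMapComp, extract]
      simp
    -- 001
    · obtain rfl : m = 𝟙 (⟨IObj.zero⟩ : IBicat) := hom_eq _ _
      obtain rfl : m' = gen01 := hom_eq _ _
      refine (iso_heq (rfl : F.map (𝟙 (⟨IObj.zero⟩ : IBicat) ≫ gen01) = F.map gen01)
        (by rw [(hF ⟨IObj.zero⟩).1] :
          F.map (𝟙 (⟨IObj.zero⟩ : IBicat)) ≫ F.map gen01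
            = 𝟙 (F.obj ⟨IObj.zero⟩) ≫ F.map gen01) ?_).symm
      rw [mapComp_id_left hF]
      dsimp only [build, bMapComp, extract]
      simp
    -- 010
    · obtain rfl : m = gen01 := hom_eq _ _
      obtain rfl : m' = gen10 := hom_eq _ _
      refine iso_heq ((hF ⟨IObj.zero⟩).1.symm :
          𝟙 (F.obj ⟨IObj.zero⟩) = F.map (gen01 ≫ gen10)) rfl ?_
      dsimp only [build, bMapComp, extract, exAdj, exUnit]
      simp
      erw [eqToHom_refl, Category.comp_id]
      rfl
    -- 011
    · obtain rfl : m = gen01 := hom_eq _ _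
      obtain rfl : m' = 𝟙 (⟨IObj.one⟩ : IBicat) := hom_eq _ _
      refine (iso_heq (rfl : F.map (gen01 ≫ 𝟙 (⟨IObj.one⟩ : IBicat)) = F.map gen01)
        (by rw [(hF ⟨IObj.one⟩).1] :
          F.map gen01 ≫ F.map (𝟙 (⟨IObj.one⟩ : IBicat))
            = F.map gen01 ≫ 𝟙 (F.obj ⟨IObj.one⟩)) ?_).symm
      rw [mapComp_id_right hF]
      dsimp only [build, bMapComp, extract]
      simp
    -- 100
    · obtain rfl : m = gen10 := hom_eq _ _
      obtain rfl : m' = 𝟙 (⟨IObj.zero⟩ : IBicat) := hom_eq _ _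
      refine (iso_heq (rfl : F.map (gen10 ≫ 𝟙 (⟨IObj.zero⟩ : IBicat)) = F.map gen10)
        (by rw [(hF ⟨IObj.zero⟩).1] :
          F.map gen10 ≫ F.map (𝟙 (⟨IObj.zero⟩ : IBicat))
            = F.map gen10 ≫ 𝟙 (F.obj ⟨IObj.zero⟩)) ?_).symm
      rw [mapComp_id_right hF]
      dsimp only [build, bMapComp, extract]
      simp
    -- 101
    · obtain rfl : m = gen10 := hom_eq _ _
      obtain rfl : m' = gen01 := hom_eq _ _
      refine iso_heq ((hF ⟨IObj.one⟩).1.symm :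
          𝟙 (F.obj ⟨IObj.one⟩) = F.map (gen10 ≫ gen01)) rfl ?_
      dsimp only [build, bMapComp, extract, exAdj, exCounit]
      simp
      erw [eqToHom_refl, Category.comp_id]
      rfl
    -- 110
    · obtain rfl : m = 𝟙 (⟨IObj.one⟩ : IBicat) := hom_eq _ _
      obtain rfl : m' = gen10 := hom_eq _ _
      refine (iso_heq (rfl : F.map (𝟙 (⟨IObj.one⟩ : IBicat) ≫ gen10) = F.map gen10)
        (by rw [(hF ⟨IObj.one⟩).1] :
          F.map (𝟙 (⟨IObj.one⟩ : IBicat)) ≫ F.map gen10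
            = 𝟙 (F.obj ⟨IObj.one⟩) ≫ F.map gen10) ?_).symm
      rw [mapComp_id_left hF]
      dsimp only [build, bMapComp, extract]
      simp
    -- 111
    · obtain rfl : m = 𝟙 (⟨IObj.one⟩ : IBicat) := hom_eq _ _
      obtain rfl : m' = 𝟙 (⟨IObj.one⟩ : IBicat) := hom_eq _ _
      refine (iso_heq (hF ⟨IObj.one⟩).1
        (by rw [(hF ⟨IObj.one⟩).1] :
          F.map (𝟙 (⟨IObj.one⟩ : IBicat)) ≫ F.map (𝟙 (⟨IObj.one⟩ : IBicat))
            = 𝟙 (F.obj ⟨IObj.one⟩) ≫ 𝟙 (F.obj ⟨IObj.one⟩)) ?_).symm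
      rw [mapComp_id_left hF, lunit_inv_conj (hF ⟨IObj.one⟩).1]
      dsimp only [build, bMapComp, extract]
      simp

end LeftInv

/-- Normal pseudofunctors `𝕀 ⟶ B` are in natural bijection with adjoint equivalences in
`B`; the bijection sends `F` to the adjoint equivalence between `F 0` and `F 1` whose
underlying morphisms are the images of the two generating morphisms of `𝕀`. -/
theorem normal_pseudofunctors_from_I :
    ∃ e : {F : Pseudofunctor IBicat B // IsNormal F} ≃
        Σ (a b : B), AdjointEquivalence a b,
      ∀ F : {F : Pseudofunctor IBicat B // IsNormal F},
        (e F).1 = F.1.obj ⟨IObj.zero⟩ ∧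
        (e F).2.1 = F.1.obj ⟨IObj.one⟩ ∧
        HEq (e F).2.2.f (F.1.map gen01) ∧
        HEq (e F).2.2.g (F.1.map gen10) := by
  refine ⟨⟨fun p => extract p.1 p.2, fun s => ⟨build s.2.2, build_isNormal s.2.2⟩, ?_, ?_⟩,
    fun F => ⟨rfl, rfl, HEq.rfl, HEq.rfl⟩⟩
  · intro p
    exact Subtype.ext (left_inv_aux p.2)
  · rintro ⟨a, b, E⟩
    exact right_inv_aux E

end Stmt9
end
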